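/- Let N be a pseudo-rank function on a *-regular ring R. Then N(LP(r) - LP(s)) <= 4 N(r - s) and N(RP(r) - RP(s)) <= 4 N(r - s) for all r, s in R. -/

import Mathlib

open scoped TensorProduct Kronecker

noncomputable section

namespace AraClaramunt

/-! ### Pseudo-rank functions and rank metric notions -/

/-- A pseudo-rank function on a unital ring. -/
structure IsPseudoRankFunction {R : Type*} [Ring R] (N : R → ℝ) : Prop where
  nonneg : ∀ x : R, 0 ≤ N x
  le_one : ∀ x : R, N x ≤ 1
  map_one : N 1 = 1
  subadditive : ∀ a b : R, N (a + b) ≤ N a + N b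
  mul_le_left : ∀ a b : R, N (a * b) ≤ N a
  mul_le_right : ∀ a b : R, N (a * b) ≤ N b
  add_of_orthogonal : ∀ e f : R, IsIdempotentElem e → IsIdempotentElem f →
    e * f = 0 → f * e = 0 → N (e + f) = N e + N f

/-- A rank function is a faithful pseudo-rank function. -/
def IsRankFunction {R : Type*} [Ring R] (N : R → ℝ) : Prop :=
  IsPseudoRankFunction N ∧ ∀ x : R, N x = 0 → x = 0

/-- Cauchy sequence for the pseudo-metric `d(x,y) = N (x - y)`. -/
def RankCauchy {R : Type*} [Ring R] (N : R → ℝ) (u : ℕ → R) : Prop :=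
  ∀ ε : ℝ, 0 < ε → ∃ n₀ : ℕ, ∀ m n : ℕ, n₀ ≤ m → n₀ ≤ n → N (u m - u n) < ε

/-- Convergence for the pseudo-metric `d(x,y) = N (x - y)`. -/
def RankTendsto {R : Type*} [Ring R] (N : R → ℝ) (u : ℕ → R) (x : R) : Prop :=
  ∀ ε : ℝ, 0 < ε → ∃ n₀ : ℕ, ∀ n : ℕ, n₀ ≤ n → N (u n - x) < ε

/-- Completeness with respect to the pseudo-metric `d(x,y) = N (x - y)`. -/
def RankComplete {R : Type*} [Ring R] (N : R → ℝ) : Prop :=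
  ∀ u : ℕ → R, RankCauchy N u → ∃ x : R, RankTendsto N u x

/-- Density of a subset with respect to the pseudo-metric `d(x,y) = N (x - y)`. -/
def RankDense {R : Type*} [Ring R] (N : R → ℝ) (S : Set R) : Prop :=
  ∀ x : R, ∀ ε : ℝ, 0 < ε → ∃ y ∈ S, N (x - y) < ε

/-- von Neumann regularity. -/
def VNRegular (R : Type*) [Ring R] : Prop :=
  ∀ x : R, ∃ y : R, x = x * y * x

/-- A continuous factor: a simple, von Neumann regular, right and left self-injective ring
admitting a rank function whose image is all of `[0,1]`. -/
def IsContinuousFactor (R : Type*) [Ring R] : Prop :=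
  IsSimpleRing R ∧ VNRegular R ∧ Module.Injective R R ∧ Module.Injective Rᵐᵒᵖ Rᵐᵒᵖ ∧
    ∃ N : R → ℝ, IsRankFunction N ∧ Set.range N = Set.Icc (0 : ℝ) 1

/-- An extremal pseudo-rank function: an extreme point of the convex set of all
pseudo-rank functions. -/
def IsExtremalPseudoRankFunction {R : Type*} [Ring R] (N : R → ℝ) : Prop :=
  N ∈ Set.extremePoints ℝ {S : R → ℝ | IsPseudoRankFunction S}

/-! ### Matricial and ultramatricial algebras -/

/-- A matricial `K`-algebra. -/
def IsMatricialAlgebra (K : Type*) [Field K] (A : Type*) [Ring A] [Algebra K A] : Prop :=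
  ∃ (k : ℕ) (n : Fin (k + 1) → ℕ), (∀ i, 0 < n i) ∧
    Nonempty (A ≃ₐ[K] ((i : Fin (k + 1)) → Matrix (Fin (n i)) (Fin (n i)) K))

/-- An ultramatricial `K`-algebra: the increasing union of matricial subalgebras. -/
def IsUltramatricialAlgebra (K : Type*) [Field K] (B : Type*) [Ring B] [Algebra K B] : Prop :=
  ∃ C : ℕ → Subalgebra K B, (∀ n, C n ≤ C (n + 1)) ∧
    (∀ n, IsMatricialAlgebra K (C n)) ∧ (∀ b : B, ∃ n, b ∈ C n)

/-- `Q`, with rank function `N`, is the rank-metric completion of a direct limit of the matrix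
algebras `M_{p n}(K)`: it is complete and carries a dense increasing tower of unital subalgebras
isomorphic to `M_{p n}(K)`. -/
def IsMatrixTowerCompletion (K : Type*) [Field K] (Q : Type*) [Ring Q] [Algebra K Q]
    (N : Q → ℝ) (p : ℕ → ℕ) : Prop :=
  IsRankFunction N ∧ RankComplete N ∧
    ∃ A : ℕ → Subalgebra K Q, (∀ n, A n ≤ A (n + 1)) ∧
      (∀ n, Nonempty ((A n) ≃ₐ[K] Matrix (Fin (p n)) (Fin (p n)) K)) ∧
      RankDense N (⋃ n, (A n : Set Q))

/-- `Q` is (a copy of) von Neumann's continuous factor `M_K`, the completion of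
`lim_n M_{2^n}(K)` with respect to its unique rank function. -/
def IsMK (K : Type*) [Field K] (Q : Type*) [Ring Q] [Algebra K Q] (N : Q → ℝ) : Prop :=
  IsMatrixTowerCompletion K Q N (fun n => 2 ^ n)

/-- The canonical block-diagonal unital embedding `M_a(K) → M_b(K)`, `z ↦ z ⊗ 1_g`,
where `b = a * g`. -/
def blockEmbedFun (K : Type*) [Semiring K] {a : ℕ} (g b : ℕ) (h : a * g = b)
    (z : Matrix (Fin a) (Fin a) K) : Matrix (Fin b) (Fin b) K :=
  Matrix.reindex (finProdFinEquiv.trans (finCongr h)) (finProdFinEquiv.trans (finCongr h))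
    (z ⊗ₖ (1 : Matrix (Fin g) (Fin g) K))

end AraClaramunt
namespace AraClaramunt

/-! ### Star notions -/

/-- Properness of an involution: `x* x = 0` implies `x = 0`. -/
def ProperStar (R : Type*) [NonUnitalNonAssocRing R] [Star R] : Prop :=
  ∀ x : R, star x * x = 0 → x = 0

/-- A projection: a self-adjoint idempotent. -/
def IsProjection {R : Type*} [Mul R] [Star R] (p : R) : Prop :=
  star p = p ∧ p * p = p

/-- The order on projections: `q ≤ p` iff `p q = q p = q`. -/
def ProjLE {R : Type*} [Mul R] (q p : R) : Prop :=
  p * q = q ∧ q * p = q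

/-- `*`-equivalence of projections: `e = w w*` and `f = w* w` for some `w`. -/
def StarEquivProj {R : Type*} [Mul R] [Star R] (e f : R) : Prop :=
  ∃ w : R, e = w * star w ∧ f = star w * w

/-- Equivalence of projections: `e = x y`, `f = y x` with `x ∈ eRf`, `y ∈ fRe`. -/
def EquivProj {R : Type*} [Mul R] (e f : R) : Prop :=
  ∃ x y : R, x = e * x * f ∧ y = f * y * e ∧ e = x * y ∧ f = y * x

/-- `y` is the relative inverse of `x` in a `*`-regular ring. -/
def IsRelativeInverse {R : Type*} [Mul R] [Star R] (x y : R) : Prop :=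
  x * y * x = x ∧ y * x * y = y ∧ star (x * y) = x * y ∧ star (y * x) = y * x

/-- `e = LP(x)`: `e` is a projection with `x R = e R`. -/
def IsLeftProjOf {R : Type*} [Mul R] [Star R] (x e : R) : Prop :=
  IsProjection e ∧ e * x = x ∧ ∃ y : R, e = x * y

/-- `f = RP(x)`: `f` is a projection with `R x = R f`. -/
def IsRightProjOf {R : Type*} [Mul R] [Star R] (x f : R) : Prop :=
  IsProjection f ∧ x * f = x ∧ ∃ y : R, f = y * x

/-- Positive definiteness of the involution of a field. -/
def PosDefStar (F : Type*) [Field F] [StarRing F] : Prop :=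
  ∀ (n : ℕ) (x : Fin n → F), (∑ i, star (x i) * x i) = 0 → ∀ i, x i = 0

/-- `*`-Pythagorean field. -/
def StarPythagorean (F : Type*) [Field F] [StarRing F] : Prop :=
  ∀ x y : F, ∃ z : F, x * star x + y * star y = z * star z

/-- A standard matricial `*`-algebra over `(F, *)`: a `*`-algebra `*`-isomorphic to a finite
product of matrix algebras `M_{n i}(F)` with the `*`-transpose involution. -/
def IsStandardMatricialStarAlgebra (F : Type*) [Field F] [StarRing F]
    (A : Type*) [Ring A] [Algebra F A] [StarRing A] [StarModule F A] : Prop :=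
  ∃ (k : ℕ) (n : Fin (k + 1) → ℕ), (∀ i, 0 < n i) ∧
    Nonempty (A ≃⋆ₐ[F] ((i : Fin (k + 1)) → Matrix (Fin (n i)) (Fin (n i)) F))

/-- A map `M_a(F) → M_b(F)` is standard (up to a permutation of the index set) if it is
`z ↦ diag(z, …, z)` (multiplicity `t`), suitably reindexed. -/
def IsStandardMatrixMap (F : Type*) [Field F] {a b : ℕ}
    (Φ : Matrix (Fin a) (Fin a) F → Matrix (Fin b) (Fin b) F) : Prop :=
  ∃ (t : ℕ) (E : Fin a × Fin t ≃ Fin b),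
    ∀ z, Φ z = Matrix.reindex E E (Matrix.blockDiagonal fun _ : Fin t => z)

/-- A map between finite products of matrix algebras over `F` is standard (block diagonal,
up to a permutation of the index sets): it is determined by multiplicities `t j i`, the `j`-th
component being the block-diagonal sum of `t j i` copies of the `i`-th component of the input. -/
def IsStandardBlockMap (F : Type*) [Field F] {k l : ℕ} (n : Fin (k + 1) → ℕ)
    (m : Fin (l + 1) → ℕ)
    (Φ : ((i : Fin (k + 1)) → Matrix (Fin (n i)) (Fin (n i)) F) →
      ((j : Fin (l + 1)) → Matrix (Fin (m j)) (Fin (m j)) F)) : Prop :=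
  ∃ t : Fin (l + 1) → Fin (k + 1) → ℕ,
    ∃ E : (j : Fin (l + 1)) →
      ((Σ c : (Σ i : Fin (k + 1), Fin (t j i)), Fin (n c.1)) ≃ Fin (m j)),
      ∀ z j, Φ z j =
        Matrix.reindex (E j) (E j)
          (Matrix.blockDiagonal' fun c : (Σ i : Fin (k + 1), Fin (t j i)) => z c.1)

end AraClaramunt
namespace AraClaramunt

/-!
For projections `e = LP r` and `f = LP s` one has `e - f = (1 - f) e - f (1 - e)`. Since
`(1 - f) s = 0` and `e ∈ r R`, the first term lies in `(1 - f) (r - s) R`, so its rank is at most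
`N (r - s)`; the second is the adjoint of `(1 - e) f`, which is bounded in the same way, and
pseudo-rank functions on `*`-regular rings are `*`-invariant because `N (LP x) = N x = N (RP x)`
and `LP (x*) = RP x`. This gives the bound with constant `2`; the right projections follow by
applying it to `r*` and `s*`.
-/

lemma ProperStar.mul_eq_zero_of_star_mul_self_mul_eq_zero {R : Type*} [Ring R] [StarRing R]
    (hproper : ProperStar R) {x b : R} (h : star x * x * b = 0) : x * b = 0 :=
  hproper _ <| by rw [star_mul, mul_assoc, ← mul_assoc (star x), h, mul_zero]

/-- With `z = x* x` and `z w z = z`, the left projection is `x (w z w*) x*`. -/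
lemma exists_isLeftProjOf {R : Type*} [Ring R] [StarRing R]
    (hreg : VNRegular R) (hproper : ProperStar R) (x : R) : ∃ e : R, IsLeftProjOf x e := by
  obtain ⟨w, hw⟩ := hreg (star x * x)
  set z := star x * x with hz
  have hz_star : star z = z := by simp [hz]
  have hzw_star : z * star w * z = z := by
    simpa [hz_star, mul_assoc] using (congrArg star hw).symm
  have hx : x * (w * z) = x := by
    have : x * (1 - w * z) = 0 :=
      hproper.mul_eq_zero_of_star_mul_self_mul_eq_zero <| by
        rw [← hz, mul_sub, mul_one, ← mul_assoc, ← hw, sub_self]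
    rwa [mul_sub, mul_one, sub_eq_zero, eq_comm] at this
  set e := x * (w * z * star w) * star x
  have he_mul : e * x = x := by
    calc e * x = x * (w * z) * (star w * z) := by simp only [e, hz, mul_assoc]
      _ = x * (w * (z * star w * z)) := by simp only [mul_assoc]
      _ = x := by rw [hzw_star, hx]
  refine ⟨e, ⟨?_, ?_⟩, he_mul, w * z * star w * star x, by simp only [e, mul_assoc]⟩
  · simp only [e, star_mul, star_star, hz_star, mul_assoc]
  · calc e * e = e * x * (w * z * star w * star x) := by simp only [e, mul_assoc]
      _ = e := by rw [he_mul]; simp only [e, mul_assoc]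

lemma IsLeftProjOf.isRightProjOf_star {R : Type*} [Mul R] [StarMul R] {x e : R}
    (h : IsLeftProjOf x e) : IsRightProjOf (star x) e := by
  obtain ⟨⟨he_star, he_idem⟩, hex, y, hey⟩ := h
  refine ⟨⟨he_star, he_idem⟩, ?_, star y, ?_⟩
  · rw [← he_star, ← star_mul, hex]
  · rw [← star_mul, ← hey, he_star]

lemma IsRightProjOf.isLeftProjOf_star {R : Type*} [Mul R] [StarMul R] {x f : R}
    (h : IsRightProjOf x f) : IsLeftProjOf (star x) f := by
  obtain ⟨⟨hf_star, hf_idem⟩, hxf, y, hfy⟩ := h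
  refine ⟨⟨hf_star, hf_idem⟩, ?_, star y, ?_⟩
  · rw [← hf_star, ← star_mul, hxf]
  · rw [← star_mul, ← hfy, hf_star]

namespace IsPseudoRankFunction

variable {R : Type*} [Ring R] {N : R → ℝ}

lemma map_neg (hN : IsPseudoRankFunction N) (x : R) : N (-x) = N x := by
  have h : ∀ y : R, N (-y) ≤ N y := fun y => by
    simpa using hN.mul_le_right (-1) y
  exact le_antisymm (h x) (by simpa using h (-x))

lemma map_sub_comm (hN : IsPseudoRankFunction N) (a b : R) : N (a - b) = N (b - a) := by
  rw [← neg_sub, hN.map_neg]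

lemma map_sub_le (hN : IsPseudoRankFunction N) (a b : R) : N (a - b) ≤ N a + N b := by
  simpa [sub_eq_add_neg, hN.map_neg] using hN.subadditive a (-b)

lemma map_of_isLeftProjOf [Star R] (hN : IsPseudoRankFunction N) {x e : R}
    (h : IsLeftProjOf x e) : N e = N x := by
  obtain ⟨-, hex, y, hey⟩ := h
  refine le_antisymm (hey ▸ hN.mul_le_left x y) ?_
  calc N x = N (e * x) := by rw [hex]
    _ ≤ N e := hN.mul_le_left e x

lemma map_of_isRightProjOf [Star R] (hN : IsPseudoRankFunction N) {x f : R}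
    (h : IsRightProjOf x f) : N f = N x := by
  obtain ⟨-, hxf, y, hfy⟩ := h
  refine le_antisymm (hfy ▸ hN.mul_le_right y x) ?_
  calc N x = N (x * f) := by rw [hxf]
    _ ≤ N f := hN.mul_le_right x f

variable [StarRing R]

lemma map_star (hreg : VNRegular R) (hproper : ProperStar R) (hN : IsPseudoRankFunction N)
    (x : R) : N (star x) = N x := by
  obtain ⟨e, he⟩ := exists_isLeftProjOf hreg hproper (star x)
  have he' : IsRightProjOf x e := by simpa using he.isRightProjOf_star
  rw [← hN.map_of_isLeftProjOf he, hN.map_of_isRightProjOf he']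

lemma map_one_sub_mul_le (hN : IsPseudoRankFunction N) {r s er es : R}
    (her : IsLeftProjOf r er) (hes : IsLeftProjOf s es) : N ((1 - es) * er) ≤ N (r - s) := by
  obtain ⟨-, -, y, rfl⟩ := her
  have hs : (1 - es) * s = 0 := by rw [sub_mul, one_mul, hes.2.1, sub_self]
  have h_factor : (1 - es) * (r * y) = (1 - es) * (r - s) * y := by
    rw [mul_sub, hs, sub_zero, mul_assoc]
  rw [h_factor]
  exact (hN.mul_le_left _ _).trans (hN.mul_le_right _ _)

lemma map_sub_le_of_isLeftProjOf (hreg : VNRegular R) (hproper : ProperStar R)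
    (hN : IsPseudoRankFunction N) {r s er es : R}
    (her : IsLeftProjOf r er) (hes : IsLeftProjOf s es) : N (er - es) ≤ 2 * N (r - s) := by
  have h_adj : es * (1 - er) = star ((1 - er) * es) := by
    rw [star_mul, star_sub, star_one, her.1.1, hes.1.1]
  calc N (er - es) = N ((1 - es) * er - es * (1 - er)) := by noncomm_ring
    _ ≤ N ((1 - es) * er) + N (es * (1 - er)) := hN.map_sub_le _ _
    _ = N ((1 - es) * er) + N ((1 - er) * es) := by rw [h_adj, hN.map_star hreg hproper]
    _ ≤ N (r - s) + N (s - r) :=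
      add_le_add (hN.map_one_sub_mul_le her hes) (hN.map_one_sub_mul_le hes her)
    _ = 2 * N (r - s) := by rw [hN.map_sub_comm s r]; ring

lemma map_sub_le_of_isRightProjOf (hreg : VNRegular R) (hproper : ProperStar R)
    (hN : IsPseudoRankFunction N) {r s fr fs : R}
    (hfr : IsRightProjOf r fr) (hfs : IsRightProjOf s fs) : N (fr - fs) ≤ 2 * N (r - s) := by
  simpa only [← star_sub, hN.map_star hreg hproper] using
    hN.map_sub_le_of_isLeftProjOf hreg hproper hfr.isLeftProjOf_star hfs.isLeftProjOf_star

end IsPseudoRankFunction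

/-- **Lemma 4.3(c)** (Ara–Claramunt). For a pseudo-rank function `N` on a `*`-regular ring,
`N (LP r - LP s) ≤ 4 N (r - s)` and `N (RP r - RP s) ≤ 4 N (r - s)`. -/
theorem statement9 (R : Type) [Ring R] [StarRing R]
    (hreg : VNRegular R) (hproper : ProperStar R)
    (N : R → ℝ) (hN : IsPseudoRankFunction N)
    (r s er es fr fs : R)
    (her : IsLeftProjOf r er) (hes : IsLeftProjOf s es)
    (hfr : IsRightProjOf r fr) (hfs : IsRightProjOf s fs) :
    N (er - es) ≤ 4 * N (r - s) ∧ N (fr - fs) ≤ 4 * N (r - s) := by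
  have h_nonneg := hN.nonneg (r - s)
  exact ⟨(hN.map_sub_le_of_isLeftProjOf hreg hproper her hes).trans (by linarith),
    (hN.map_sub_le_of_isRightProjOf hreg hproper hfr hfs).trans (by linarith)⟩

end AraClaramunt
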